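/- arXiv:1907.03753 — 8 statements merged into one kernel-verified Lean document; each statement's English description precedes it below -/
import Mathlib

section
/- If $p_1,\ldots,p_n$ are positive real numbers ($n\geq 1$) and $C_1,\ldots,C_n$ are nonzero idempotent elements (events) of a unital commutative associative real algebra $\mathcal{T}$, then $\sum_{i=1}^n p_i C_i \neq 0$. -/
/-! Multiplying `C i₀` by the idempotents `C i` in turn, skipping each factor that would make
the product vanish, yields a nonzero idempotent `e ≤ C i₀` that is an atom for the `C i`:
`e * C i` is `e` or `0`. Multiplying the sum by `e` leaves `c • e` with `c ≥ p i₀ > 0`,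
which is nonzero. -/

open Finset

theorem exists_ne_zero_mul_eq_self_or_eq_zero {M ι : Type*} [CommMonoidWithZero M]
    (s : Finset ι) (C : ι → M) (hC : ∀ i ∈ s, IsIdempotentElem (C i))
    {a : M} (ha : IsIdempotentElem a) (ha0 : a ≠ 0) :
    ∃ e ≠ 0, e * a = e ∧ ∀ i ∈ s, e * C i = e ∨ e * C i = 0 := by
  classical
  induction s using Finset.induction_on with
  | empty => exact ⟨a, ha0, ha, by simp⟩
  | @insert j s hj ih =>
    obtain ⟨e, he0, hea, hes⟩ := ih fun i hi => hC i (mem_insert_of_mem hi)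
    by_cases hej : e * C j = 0
    · refine ⟨e, he0, hea, ?_⟩
      rintro i hi
      rcases mem_insert.mp hi with rfl | hi
      exacts [Or.inr hej, hes i hi]
    · refine ⟨e * C j, hej, by rw [mul_right_comm, hea], ?_⟩
      rintro i hi
      rcases mem_insert.mp hi with rfl | hi
      · exact Or.inl (by rw [mul_assoc, hC i (mem_insert_self i s)])
      · rcases hes i hi with hei | hei
        · exact Or.inl (by rw [mul_right_comm, hei])
        · exact Or.inr (by rw [mul_right_comm, hei, zero_mul])

theorem mul_sum_smul_eq_sum_filter_smul {R A ι : Type*} [Semiring R] [Semiring A]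
    [DecidableEq A] [Module R A] [SMulCommClass R A A]
    (s : Finset ι) (p : ι → R) (C : ι → A) {e : A}
    (h : ∀ i ∈ s, e * C i = e ∨ e * C i = 0) :
    e * ∑ i ∈ s, p i • C i = (∑ i ∈ s with e * C i = e, p i) • e := by
  rw [mul_sum, sum_filter, sum_smul]
  refine sum_congr rfl fun i hi => ?_
  rw [mul_smul_comm]
  split_ifs with hei
  · rw [hei]
  · rw [(h i hi).resolve_left hei, smul_zero, zero_smul]

theorem pos_comb_nonzero_events {T : Type*} [CommRing T] [Algebra ℝ T]
    (n : ℕ) (hn : 1 ≤ n) (p : Fin n → ℝ) (hp : ∀ i, 0 < p i)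
    (C : Fin n → T) (hidem : ∀ i, C i * C i = C i) (hne : ∀ i, C i ≠ 0) :
    (∑ i, p i • C i) ≠ 0 := by
  classical
  let i₀ : Fin n := ⟨0, hn⟩
  obtain ⟨e, he0, hei₀, hatom⟩ := exists_ne_zero_mul_eq_self_or_eq_zero univ C
    (fun i _ => hidem i) (hidem i₀) (hne i₀)
  intro hsum
  have hpos : 0 < ∑ i with e * C i = e, p i :=
    sum_pos (fun i _ => hp i) ⟨i₀, by simpa using hei₀⟩
  have hzero : (∑ i with e * C i = e, p i) • e = 0 := by
    rw [← mul_sum_smul_eq_sum_filter_smul univ p C hatom, hsum, mul_zero]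
  exact he0 ((smul_eq_zero.mp hzero).resolve_left hpos.ne')
end

section
/- Plausible property of plausible equivalence: if $p_1,\ldots,p_n$ are positive reals, $A_1,\ldots,A_n$ are events, $\sim$ is the equivalence part of a plausible preorder $\lesssim$, and $0 \sim \sum_{i=1}^n p_i A_i$, then $0 \sim A_i$ for every $i$. -/
/-- A plausible preorder on a unital associative commutative real algebra. -/
structure PlausiblePreorder (T : Type*) [CommRing T] [Algebra ℝ T] where
  le : T → T → Prop
  plausible : ∀ A : T, A * A = A → le 0 A
  additive : ∀ X Y : T, le 0 X → le 0 Y → le 0 (X + Y)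
  smul_nonneg : ∀ (q : ℝ) (X : T), 0 ≤ q → le 0 X → le 0 (q • X)
  extension : ∀ X Y : T, le X Y ↔ le 0 (Y - X)

variable {T : Type*} [CommRing T] [Algebra ℝ T]

/-- The strict part of a plausible preorder. -/
def PlausiblePreorder.lt (P : PlausiblePreorder T) (X Y : T) : Prop :=
  P.le X Y ∧ ¬ P.le Y X

/-- The equivalence part of a plausible preorder. -/
def PlausiblePreorder.equiv (P : PlausiblePreorder T) (X Y : T) : Prop :=
  P.le X Y ∧ P.le Y X

namespace PlausiblePreorder

variable (P : PlausiblePreorder T)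

theorem le_zero_iff_zero_le_neg {X : T} : P.le X 0 ↔ P.le 0 (-X) := by
  rw [P.extension, zero_sub]

theorem zero_le_zero : P.le 0 0 :=
  P.plausible 0 (mul_zero 0)

theorem sum_nonneg {ι : Type*} (s : Finset ι) (f : ι → T) (hf : ∀ i ∈ s, P.le 0 (f i)) :
    P.le 0 (∑ i ∈ s, f i) :=
  Finset.sum_induction f (P.le 0) P.additive P.zero_le_zero hf

theorem le_zero_of_add_le_zero {X Y : T} (hY : P.le 0 Y) (h : P.le (X + Y) 0) : P.le X 0 := by
  rw [le_zero_iff_zero_le_neg] at h ⊢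
  simpa using P.additive _ _ h hY

theorem le_zero_of_smul_le_zero {q : ℝ} (hq : 0 < q) {X : T} (h : P.le (q • X) 0) : P.le X 0 := by
  rw [le_zero_iff_zero_le_neg] at h ⊢
  simpa [smul_smul, inv_mul_cancel₀ hq.ne'] using P.smul_nonneg q⁻¹ _ (inv_nonneg.mpr hq.le) h

end PlausiblePreorder

theorem plausibleEquiv_plausible_property (P : PlausiblePreorder T)
    (n : ℕ) (p : Fin n → ℝ) (hp : ∀ i, 0 < p i)
    (A : Fin n → T) (hA : ∀ i, A i * A i = A i)
    (h : P.equiv 0 (∑ i, p i • A i)) :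
    ∀ i, P.equiv 0 (A i) := by
  intro j
  have hterm : ∀ i, P.le 0 (p i • A i) := fun i =>
    P.smul_nonneg _ _ (hp i).le (P.plausible _ (hA i))
  have hrest : P.le 0 (∑ i ∈ Finset.univ.erase j, p i • A i) :=
    P.sum_nonneg _ _ fun i _ => hterm i
  have hsplit : P.le (p j • A j + ∑ i ∈ Finset.univ.erase j, p i • A i) 0 := by
    rw [Finset.add_sum_erase _ (fun i => p i • A i) (Finset.mem_univ j)]
    exact h.2
  exact ⟨P.plausible _ (hA j),
    P.le_zero_of_smul_le_zero (hp j) (P.le_zero_of_add_le_zero hrest hsplit)⟩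
end

section
/- Every relation $\sim$ on $\mathcal{T}$ satisfying the fundamental properties of a plausible equivalence (plausible property, reflexivity at 0, additivity, multiplicativity by all reals, and extension property) is the equivalence part of some plausible preorder; moreover, the relation defined by $0\lesssim X$ iff $X = U + \sum_{i=1}^n q_i A_i$ for some $U \sim 0$, $n\geq 0$, nonnegative reals $q_i$ and events $A_i$ (extended by $X\lesssim Y$ iff $0\lesssim Y-X$) is the smallest such plausible preorder. -/
variable {T : Type*} [CommRing T] [Algebra ℝ T]

/-- The candidate "nonnegative" predicate generated by a plausible equivalence:
`0 ≲ X` iff `X = U + ∑ qᵢ • Aᵢ` for some `U ∼ 0`, nonnegative reals `qᵢ` and events `Aᵢ`. -/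
def genNonneg (sim : T → T → Prop) (X : T) : Prop :=
  ∃ (U : T) (n : ℕ) (q : Fin n → ℝ) (A : Fin n → T),
    sim U 0 ∧ (∀ i, 0 ≤ q i) ∧ (∀ i, A i * A i = A i) ∧ X = U + ∑ i, q i • A i


/-!
The elements `X ∼ 0` form a real subspace `N`, and `0 ≲ X` says that `X` lies in the pointed
cone generated by `N` and the events. This cone is contained in the nonnegative cone of any
plausible preorder whose equivalence part is `∼`, which gives minimality. The real point is
that the equivalence part of `≲` is `∼` again: if `X = U + S` and `-X = U' + S'` with `U, U' ∼ 0`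
and `S, S'` nonnegative combinations of events, then `S + S' = -(U + U') ∼ 0`, so the plausible
property makes every term of `S + S'`, hence `S` and `X`, equivalent to `0`.
-/

section Cone

variable {R : Type*} [Ring R] [Module ℝ R]

variable (R) in
def eventCone : PointedCone ℝ R :=
  PointedCone.hull ℝ {A : R | IsIdempotentElem A}

theorem mem_eventCone_iff {X : R} :
    X ∈ eventCone R ↔ ∃ (n : ℕ) (q : Fin n → ℝ) (A : Fin n → R),
      (∀ i, 0 ≤ q i) ∧ (∀ i, IsIdempotentElem (A i)) ∧ X = ∑ i, q i • A i := by
  constructor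
  · intro hX
    obtain ⟨n, q, A, rfl⟩ := Submodule.mem_span_set'.mp hX
    exact ⟨n, fun i => q i, fun i => A i, fun i => (q i).2, fun i => (A i).2, rfl⟩
  · rintro ⟨n, q, A, hq, hA, rfl⟩
    exact Submodule.sum_mem _ fun i _ =>
      PointedCone.smul_mem _ (hq i) (Submodule.subset_span (hA i))

def plausibleCone (N : Submodule ℝ R) : PointedCone ℝ R :=
  N ⊔ eventCone R

theorem idempotent_mem_plausibleCone (N : Submodule ℝ R) {A : R} (hA : IsIdempotentElem A) :
    A ∈ plausibleCone N :=
  Submodule.mem_sup_right (Submodule.subset_span hA)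

/-- The plausible property of the subspace of elements `X ∼ 0`. -/
def IsPlausibleNull (N : Submodule ℝ R) : Prop :=
  ∀ (n : ℕ) (p : Fin n → ℝ) (A : Fin n → R), (∀ i, 0 < p i) → (∀ i, IsIdempotentElem (A i)) →
    ∑ i, p i • A i ∈ N → ∀ i, A i ∈ N

namespace IsPlausibleNull

variable {N : Submodule ℝ R}

theorem mem_of_sum_mem (hN : IsPlausibleNull N) {ι : Type*} [Fintype ι] {p : ι → ℝ}
    {A : ι → R} (hp : ∀ i, 0 < p i) (hA : ∀ i, IsIdempotentElem (A i))
    (h : ∑ i, p i • A i ∈ N) (i : ι) :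
    A i ∈ N := by
  let e := Fintype.equivFin ι
  have h' : ∑ j, p (e.symm j) • A (e.symm j) ∈ N := by
    rwa [e.symm.sum_comp fun i => p i • A i]
  simpa using hN _ (p ∘ e.symm) (A ∘ e.symm) (fun j => hp _) (fun j => hA _) h' (e i)

theorem smul_mem_of_sum_mem (hN : IsPlausibleNull N) {ι : Type*} [Fintype ι] {q : ι → ℝ}
    {A : ι → R} (hq : ∀ i, 0 ≤ q i) (hA : ∀ i, IsIdempotentElem (A i))
    (h : ∑ i, q i • A i ∈ N) (i : ι) :
    q i • A i ∈ N := by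
  -- a zero coefficient is traded for the coefficient `1` in front of the event `0`
  let p : ι → ℝ := fun i => if 0 < q i then q i else 1
  let B : ι → R := fun i => if 0 < q i then A i else 0
  have hpB : ∀ i, p i • B i = q i • A i := by
    intro i
    by_cases hi : 0 < q i
    · simp [p, B, hi]
    · simp [p, B, le_antisymm (not_lt.mp hi) (hq i)]
  have hp : ∀ i, 0 < p i := by
    intro i; by_cases hi : 0 < q i <;> simp [p, hi]
  have hB : ∀ i, IsIdempotentElem (B i) := by
    intro i; by_cases hi : 0 < q i <;> simp [B, hi, hA i, IsIdempotentElem.zero]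
  rw [← hpB]
  exact N.smul_mem _ (hN.mem_of_sum_mem hp hB (by simpa only [hpB] using h) i)

theorem mem_of_add_mem (hN : IsPlausibleNull N) {S S' : R} (hS : S ∈ eventCone R)
    (hS' : S' ∈ eventCone R) (h : S + S' ∈ N) : S ∈ N := by
  obtain ⟨n, q, A, hq, hA, rfl⟩ := mem_eventCone_iff.mp hS
  obtain ⟨m, q', A', hq', hA', rfl⟩ := mem_eventCone_iff.mp hS'
  have hterm := hN.smul_mem_of_sum_mem (q := Sum.elim q q') (A := Sum.elim A A')
    (by simpa [Sum.forall] using ⟨hq, hq'⟩) (by simpa [Sum.forall] using ⟨hA, hA'⟩)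
    (by simpa [Fintype.sum_sum_type] using h)
  exact N.sum_mem fun i _ => hterm (.inl i)

theorem mem_of_mem_plausibleCone_of_neg_mem (hN : IsPlausibleNull N) {X : R}
    (hX : X ∈ plausibleCone N) (hX' : -X ∈ plausibleCone N) : X ∈ N := by
  obtain ⟨U, hU, S, hS, rfl⟩ := Submodule.mem_sup.mp hX
  obtain ⟨U', hU', S', hS', hsum⟩ := Submodule.mem_sup.mp hX'
  have hSS' : S + S' = -(U + U') := by grind
  have hSS'N : S + S' ∈ N := hSS' ▸ N.neg_mem (N.add_mem hU hU')
  exact N.add_mem hU (hN.mem_of_add_mem hS hS' hSS'N)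

end IsPlausibleNull

end Cone

namespace PlausiblePreorder

def ofCone (C : PointedCone ℝ T) (hC : ∀ A : T, IsIdempotentElem A → A ∈ C) :
    PlausiblePreorder T where
  le X Y := Y - X ∈ C
  plausible A hA := by simpa using hC A hA
  additive X Y hX hY := by simpa using C.add_mem (by simpa using hX) (by simpa using hY)
  smul_nonneg q X hq hX := by simpa using C.smul_mem hq (by simpa using hX)
  extension X Y := by simp

theorem ofCone_le {C : PointedCone ℝ T} {hC : ∀ A : T, IsIdempotentElem A → A ∈ C} {X Y : T} :
    (ofCone C hC).le X Y ↔ Y - X ∈ C :=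
  Iff.rfl

def nonnegCone (Q : PlausiblePreorder T) : PointedCone ℝ T where
  carrier := {X | Q.le 0 X}
  zero_mem' := Q.plausible 0 (mul_zero 0)
  add_mem' := Q.additive _ _
  smul_mem' c X := Q.smul_nonneg c X c.2

theorem plausibleCone_le_nonnegCone (Q : PlausiblePreorder T) {N : Submodule ℝ T}
    (hN : ∀ X ∈ N, Q.le 0 X) : plausibleCone N ≤ Q.nonnegCone :=
  sup_le hN (Submodule.span_le.mpr fun A hA => Q.plausible A hA)

end PlausiblePreorder

theorem genNonneg_iff_mem_plausibleCone {sim : T → T → Prop} {N : Submodule ℝ T}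
    (hN : ∀ U, sim U 0 ↔ U ∈ N) (X : T) : genNonneg sim X ↔ X ∈ plausibleCone N := by
  constructor
  · rintro ⟨U, n, q, A, hU, hq, hA, rfl⟩
    exact Submodule.add_mem_sup ((hN U).mp hU) (mem_eventCone_iff.mpr ⟨n, q, A, hq, hA, rfl⟩)
  · intro hX
    obtain ⟨U, hU, S, hS, rfl⟩ := Submodule.mem_sup.mp hX
    obtain ⟨n, q, A, hq, hA, rfl⟩ := mem_eventCone_iff.mp hS
    exact ⟨U, n, q, A, (hN U).mpr hU, hq, hA, rfl⟩

theorem plausibleEquiv_sufficiency (sim : T → T → Prop)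
    (hplaus : ∀ (n : ℕ) (p : Fin n → ℝ) (A : Fin n → T),
      (∀ i, 0 < p i) → (∀ i, A i * A i = A i) →
      sim 0 (∑ i, p i • A i) → ∀ i, sim 0 (A i))
    (hrefl : sim 0 0)
    (hadd : ∀ X Y : T, sim 0 X → sim 0 Y → sim 0 (X + Y))
    (hsmul : ∀ (r : ℝ) (X : T), sim 0 X → sim 0 (r • X))
    (hext : ∀ X Y : T, sim X Y ↔ sim 0 (Y - X)) :
    ∃ P : PlausiblePreorder T,
      (P.le = fun X Y => genNonneg sim (Y - X)) ∧
      (∀ X Y : T, P.equiv X Y ↔ sim X Y) ∧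
      (∀ Q : PlausiblePreorder T, (∀ X Y : T, Q.equiv X Y ↔ sim X Y) →
        ∀ X Y : T, P.le X Y → Q.le X Y) := by
  let N : Submodule ℝ T :=
    { carrier := {X | sim 0 X}, zero_mem' := hrefl, add_mem' := hadd _ _, smul_mem' := hsmul }
  have hN : IsPlausibleNull N := hplaus
  have hsim : ∀ X Y, sim X Y ↔ Y - X ∈ N := hext
  have hgen := genNonneg_iff_mem_plausibleCone (N := N) fun U => by simpa using hsim U 0
  refine ⟨.ofCone (plausibleCone N) fun A => idempotent_mem_plausibleCone N,
    funext₂ fun X Y => propext (hgen _).symm, fun X Y => ?_, fun Q hQ X Y hXY => ?_⟩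
  · rw [hsim, PlausiblePreorder.equiv, PlausiblePreorder.ofCone_le, PlausiblePreorder.ofCone_le,
      ← neg_sub Y X]
    exact ⟨fun h => hN.mem_of_mem_plausibleCone_of_neg_mem h.1 h.2,
      fun h => ⟨Submodule.mem_sup_left h, Submodule.mem_sup_left (N.neg_mem h)⟩⟩
  · refine (Q.extension X Y).mpr (Q.plausibleCone_le_nonnegCone ?_ hXY)
    exact fun Z hZ => ((hQ 0 Z).mpr (by simpa [hsim] using hZ)).1
end

section
/- Every relation $\lnsim$ on $\mathcal{T}$ satisfying the fundamental properties of a plausible strict partial order is the strict part of some plausible preorder; in particular, defining $0\lesssim X$ iff either $0\lnsim X$ or $X=\sum_{i=1}^n r_i A_i$ for real $r_i$ and events $A_i$ with $\neg(0\lnsim A_i)$ for all $i$, yields the smallest plausible preorder whose strict part is $\lnsim$. -/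
variable {T : Type*} [CommRing T] [Algebra ℝ T]

/-- The candidate "nonnegative" predicate generated by a plausible strict partial order:
`0 ≲ X` iff either `0 ⋦ X`, or `X = ∑ rᵢ • Aᵢ` for reals `rᵢ` and events `Aᵢ`
with `¬(0 ⋦ Aᵢ)`. -/
def genNonnegStrict (slt : T → T → Prop) (X : T) : Prop :=
  slt 0 X ∨ ∃ (n : ℕ) (r : Fin n → ℝ) (A : Fin n → T),
    (∀ i, A i * A i = A i) ∧ (∀ i, ¬ slt 0 (A i)) ∧ X = ∑ i, r i • A i

/-!
The combinations `∑ rᵢ • Aᵢ` of events with `¬(0 ⋦ Aᵢ)` form the real span of those events.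
Adding an element of this span to a strictly positive `X` keeps it strictly positive: by the
plausible property this holds for a single event, and the set of such translations is closed
under sums and, after rescaling `X`, under real multiples. Hence `0 ≲ X` and `0 ≲ -X` can only
hold together with `0 ⋦ X` if `0 ⋦ 0`, so the strict part of `≲` is `⋦`. Conversely every
plausible preorder with strict part `⋦` makes each such event equivalent to `0`, hence each
element of the span, so it contains `≲`.
-/

open Submodule

def nullSpan (slt : T → T → Prop) : Submodule ℝ T :=
  span ℝ {A | A * A = A ∧ ¬ slt 0 A}

section Strict

variable {slt : T → T → Prop}

theorem genNonnegStrict_iff {X : T} : genNonnegStrict slt X ↔ slt 0 X ∨ X ∈ nullSpan slt := by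
  refine or_congr_right ⟨?_, fun hX => ?_⟩
  · rintro ⟨n, r, A, hA, hnA, rfl⟩
    exact sum_mem fun i _ => smul_mem _ _ (subset_span ⟨hA i, hnA i⟩)
  · obtain ⟨n, r, A, hX⟩ := mem_span_set'.mp hX
    exact ⟨n, r, fun i => A i, fun i => (A i).2.1, fun i => (A i).2.2, hX.symm⟩

variable (hsmul : ∀ (p : ℝ) (X : T), 0 < p → slt 0 X → slt 0 (p • X))
include hsmul

theorem slt_zero_add_smul {Z : T} (hZ : ∀ X, slt 0 X → slt 0 (X + Z) ∧ slt 0 (X - Z))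
    {X : T} (hX : slt 0 X) (r : ℝ) : slt 0 (X + r • Z) := by
  rcases lt_trichotomy r 0 with hr | rfl | hr
  · have h := hsmul (-r) _ (neg_pos.mpr hr) (hZ _ (hsmul _ _ (inv_pos.mpr (neg_pos.mpr hr)) hX)).2
    rwa [smul_sub, smul_smul, mul_inv_cancel₀ (neg_ne_zero.mpr hr.ne), one_smul, neg_smul,
      sub_neg_eq_add] at h
  · simpa using hX
  · have h := hsmul r _ hr (hZ _ (hsmul _ _ (inv_pos.mpr hr) hX)).1
    rwa [smul_add, smul_smul, mul_inv_cancel₀ hr.ne', one_smul] at h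

variable (hplaus : ∀ A X : T, A * A = A → ¬ slt 0 A → slt 0 X →
      slt 0 (X + A) ∧ slt 0 (X - A))
include hplaus

theorem slt_zero_add_of_mem_nullSpan {X Z : T} (hX : slt 0 X) (hZ : Z ∈ nullSpan slt) :
    slt 0 (X + Z) := by
  suffices ∀ X, slt 0 X → slt 0 (X + Z) ∧ slt 0 (X - Z) from (this X hX).1
  induction hZ using span_induction with
  | mem A hA => exact fun X hX => hplaus A X hA.1 hA.2 hX
  | zero => simp
  | add Z₁ Z₂ _ _ h₁ h₂ =>
    intro X hX
    rw [← add_assoc, sub_add_eq_sub_sub]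
    exact ⟨(h₂ _ (h₁ X hX).1).1, (h₂ _ (h₁ X hX).2).2⟩
  | smul r Z _ hZ =>
    intro X hX
    rw [sub_eq_add_neg, ← neg_smul]
    exact ⟨slt_zero_add_smul hsmul hZ hX r, slt_zero_add_smul hsmul hZ hX (-r)⟩

theorem genNonnegStrict_and_not_neg_iff (hirrefl : ¬ slt 0 0)
    (hadd : ∀ X Y : T, slt 0 X → slt 0 Y → slt 0 (X + Y)) (Z : T) :
    genNonnegStrict slt Z ∧ ¬ genNonnegStrict slt (-Z) ↔ slt 0 Z := by
  simp only [genNonnegStrict_iff, neg_mem_iff]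
  constructor
  · rintro ⟨hZ | hZ, hnZ⟩
    exacts [hZ, (hnZ (Or.inr hZ)).elim]
  · refine fun hZ => ⟨Or.inl hZ, ?_⟩
    rintro (hnZ | hnZ)
    · exact hirrefl (by simpa using hadd _ _ hZ hnZ)
    · exact hirrefl (by simpa using slt_zero_add_of_mem_nullSpan hsmul hplaus hZ (neg_mem hnZ))

def PlausiblePreorder.ofStrict (hadd : ∀ X Y : T, slt 0 X → slt 0 Y → slt 0 (X + Y)) :
    PlausiblePreorder T where
  le X Y := genNonnegStrict slt (Y - X)
  plausible A hA := by
    rw [sub_zero, genNonnegStrict_iff]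
    by_cases h : slt 0 A
    exacts [Or.inl h, Or.inr (subset_span ⟨hA, h⟩)]
  additive X Y hX hY := by
    rw [sub_zero, genNonnegStrict_iff] at *
    rcases hX with hX | hX <;> rcases hY with hY | hY
    · exact Or.inl (hadd _ _ hX hY)
    · exact Or.inl (slt_zero_add_of_mem_nullSpan hsmul hplaus hX hY)
    · exact Or.inl (add_comm X Y ▸ slt_zero_add_of_mem_nullSpan hsmul hplaus hY hX)
    · exact Or.inr (add_mem hX hY)
  smul_nonneg q X hq hX := by
    rw [sub_zero, genNonnegStrict_iff] at *
    rcases hq.eq_or_lt with rfl | hq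
    · exact Or.inr (by simp)
    · exact hX.imp (hsmul q X hq) (smul_mem _ q)
  extension X Y := by simp

end Strict

namespace PlausiblePreorder

theorem le_zero_iff (P : PlausiblePreorder T) {Z : T} : P.le Z 0 ↔ P.le 0 (-Z) := by
  rw [P.extension, zero_sub]

theorem le_zero_smul_of_equiv (P : PlausiblePreorder T) {Z : T} (hZ : P.equiv 0 Z) (r : ℝ) :
    P.le 0 (r • Z) := by
  rcases le_total 0 r with hr | hr
  · exact P.smul_nonneg r Z hr hZ.1
  · simpa using P.smul_nonneg (-r) (-Z) (neg_nonneg.mpr hr) (P.le_zero_iff.mp hZ.2)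

theorem equiv_zero_of_mem_span (P : PlausiblePreorder T) {s : Set T}
    (hs : ∀ A ∈ s, P.equiv 0 A) {Z : T} (hZ : Z ∈ span ℝ s) : P.equiv 0 Z := by
  induction hZ using span_induction with
  | mem A hA => exact hs A hA
  | zero => exact ⟨P.plausible 0 (mul_zero 0), P.plausible 0 (mul_zero 0)⟩
  | add Z₁ Z₂ _ _ h₁ h₂ =>
    refine ⟨P.additive _ _ h₁.1 h₂.1, P.le_zero_iff.mpr ?_⟩
    rw [neg_add]
    exact P.additive _ _ (P.le_zero_iff.mp h₁.2) (P.le_zero_iff.mp h₂.2)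
  | smul r Z _ hZ =>
    exact ⟨P.le_zero_smul_of_equiv hZ r,
      P.le_zero_iff.mpr (by simpa using P.le_zero_smul_of_equiv hZ (-r))⟩

theorem equiv_zero_of_not_lt {P : PlausiblePreorder T} {A : T} (hA : A * A = A)
    (hnA : ¬ P.lt 0 A) : P.equiv 0 A :=
  ⟨P.plausible A hA, not_and_not_right.mp hnA (P.plausible A hA)⟩

end PlausiblePreorder

theorem plausibleStrict_sufficiency (slt : T → T → Prop)
    (hplaus : ∀ A X : T, A * A = A → ¬ slt 0 A → slt 0 X →
      slt 0 (X + A) ∧ slt 0 (X - A))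
    (hirrefl : ¬ slt 0 0)
    (hadd : ∀ X Y : T, slt 0 X → slt 0 Y → slt 0 (X + Y))
    (hsmul : ∀ (p : ℝ) (X : T), 0 < p → slt 0 X → slt 0 (p • X))
    (hext : ∀ X Y : T, slt X Y ↔ slt 0 (Y - X)) :
    ∃ P : PlausiblePreorder T,
      (P.le = fun X Y => genNonnegStrict slt (Y - X)) ∧
      (∀ X Y : T, P.lt X Y ↔ slt X Y) ∧
      (∀ Q : PlausiblePreorder T, (∀ X Y : T, Q.lt X Y ↔ slt X Y) →
        ∀ X Y : T, P.le X Y → Q.le X Y) := by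
  refine ⟨PlausiblePreorder.ofStrict hsmul hplaus hadd, rfl, fun X Y => ?_, fun Q hQ X Y h => ?_⟩
  · rw [hext, PlausiblePreorder.lt, ← genNonnegStrict_and_not_neg_iff hsmul hplaus hirrefl hadd,
      neg_sub]
    rfl
  · rw [Q.extension]
    rcases genNonnegStrict_iff.mp h with h | h
    · exact ((hQ 0 (Y - X)).mpr h).1
    · refine (Q.equiv_zero_of_mem_span (fun A hA => ?_) h).1
      exact PlausiblePreorder.equiv_zero_of_not_lt hA.1 (fun hlt => hA.2 ((hQ 0 A).mp hlt))
end

section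
/- Existence and uniqueness of expectation: for a plausible preorder $\lesssim$ with strict part $\lnsim$ and a random quantity $X$, the expectation $E(X)$ exists if and only if, in the extended real line, $\sup\{r\in\mathbb{R} : r\lnsim X\} = \inf\{r\in\mathbb{R} : X\lnsim r\}$, and in that case $E(X)$ equals this common value. -/
variable {T : Type*} [CommRing T] [Algebra ℝ T]

/-- `ExpIs P X e`: the expectation of `X` naturally induced by `P` is `e ∈ ℝ̄`. -/
def ExpIs (P : PlausiblePreorder T) (X : T) (e : EReal) : Prop :=
  (∃ x : ℝ, e = (x : EReal) ∧ ∀ ε : ℝ, 0 < ε →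
      P.lt ((-ε) • (1 : T)) (X - x • (1 : T)) ∧ P.lt (X - x • (1 : T)) (ε • (1 : T))) ∨
  (e = ⊤ ∧ ∀ y : ℝ, P.lt (y • (1 : T)) X) ∨
  (e = ⊥ ∧ ∀ y : ℝ, P.lt X (y • (1 : T)))

/-!
The sets `L = {r | r ⋦ X}` and `U = {r | X ⋦ r}` of real constants strictly below and strictly
above `X` are a lower and an upper set of `ℝ` with `L < U`. Unfolding the definition, `E(X) = e`
says exactly that every real below `e` lies in `L` and every real above `e` lies in `U`. Such an
`e` is then the least upper bound of `L` and the greatest lower bound of `U`; conversely, if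
`sup L = inf U`, this common value has the property, since `L` and `U` are closed downwards and
upwards.
-/

namespace PlausiblePreorder

variable (P : PlausiblePreorder T)

theorem le_trans {a b c : T} (hab : P.le a b) (hbc : P.le b c) : P.le a c := by
  rw [P.extension] at hab hbc ⊢
  simpa only [sub_add_sub_cancel'] using P.additive _ _ hab hbc

theorem lt_of_le_of_lt {a b c : T} (hab : P.le a b) (hbc : P.lt b c) : P.lt a c :=
  ⟨P.le_trans hab hbc.1, fun hca => hbc.2 (P.le_trans hca hab)⟩

theorem lt_of_lt_of_le {a b c : T} (hab : P.lt a b) (hbc : P.le b c) : P.lt a c :=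
  ⟨P.le_trans hab.1 hbc, fun hca => hab.2 (P.le_trans hbc hca)⟩

theorem lt_iff_lt_of_sub_eq_sub {a b c d : T} (h : b - a = d - c) : P.lt a b ↔ P.lt c d := by
  have h' : a - b = c - d := by rw [← neg_sub b a, h, neg_sub]
  rw [lt, lt, P.extension a b, P.extension b a, P.extension c d, P.extension d c, h, h']

theorem smul_one_le_smul_one {r s : ℝ} (h : r ≤ s) : P.le (r • (1 : T)) (s • (1 : T)) := by
  rw [P.extension, ← sub_smul]
  exact P.smul_nonneg _ _ (sub_nonneg.2 h) (P.plausible 1 (one_mul 1))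

variable (X : T)

theorem isLowerSet_setOf_smul_one_lt : IsLowerSet {r : ℝ | P.lt (r • (1 : T)) X} :=
  fun _ _ hsr hr => P.lt_of_le_of_lt (P.smul_one_le_smul_one hsr) hr

theorem isUpperSet_setOf_lt_smul_one : IsUpperSet {r : ℝ | P.lt X (r • (1 : T))} :=
  fun _ _ hrs hr => P.lt_of_lt_of_le hr (P.smul_one_le_smul_one hrs)

variable {X}

theorem lt_of_smul_one_lt_of_lt_smul_one {r s : ℝ} (hr : P.lt (r • (1 : T)) X)
    (hs : P.lt X (s • (1 : T))) : r < s :=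
  not_le.1 fun hsr => hr.2 (P.lt_of_lt_of_le hs (P.smul_one_le_smul_one hsr)).1

theorem neg_smul_one_lt_sub_iff (x ε : ℝ) :
    P.lt ((-ε) • (1 : T)) (X - x • (1 : T)) ↔ P.lt ((x - ε) • (1 : T)) X :=
  P.lt_iff_lt_of_sub_eq_sub (by rw [neg_smul, sub_smul]; abel)

theorem sub_lt_smul_one_iff (x ε : ℝ) :
    P.lt (X - x • (1 : T)) (ε • (1 : T)) ↔ P.lt X ((x + ε) • (1 : T)) :=
  P.lt_iff_lt_of_sub_eq_sub (by rw [add_smul]; abel)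

end PlausiblePreorder

theorem expIs_iff (P : PlausiblePreorder T) (X : T) (e : EReal) :
    ExpIs P X e ↔ (∀ r : ℝ, (r : EReal) < e → P.lt (r • (1 : T)) X) ∧
      (∀ r : ℝ, e < (r : EReal) → P.lt X (r • (1 : T))) := by
  induction e using EReal.rec with
  | bot => simp [ExpIs]
  | top => simp [ExpIs]
  | coe x =>
    simp only [ExpIs, EReal.coe_ne_top, EReal.coe_ne_bot, EReal.coe_eq_coe_iff,
      EReal.coe_lt_coe_iff, false_and, or_false, exists_eq_left', P.neg_smul_one_lt_sub_iff,
      P.sub_lt_smul_one_iff]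
    constructor
    · intro h
      refine ⟨fun r hr => ?_, fun r hr => ?_⟩
      · simpa using (h (x - r) (sub_pos.2 hr)).1
      · simpa using (h (r - x) (sub_pos.2 hr)).2
    · exact fun ⟨hL, hU⟩ ε hε => ⟨hL _ (by linarith), hU _ (by linarith)⟩

namespace EReal

variable {L U : Set ℝ} {e : EReal}

theorem isLUB_image_coe (hle : ∀ l ∈ L, (l : EReal) ≤ e)
    (hlt : ∀ r : ℝ, (r : EReal) < e → r ∈ L) :
    IsLUB ((↑) '' L : Set EReal) e := by
  refine ⟨Set.forall_mem_image.2 hle, fun b hb => not_lt.1 fun hbe => ?_⟩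
  obtain ⟨r, hbr, hre⟩ := exists_between_coe_real hbe
  exact (hb (Set.mem_image_of_mem _ (hlt r hre))).not_gt hbr

theorem isGLB_image_coe (hle : ∀ u ∈ U, e ≤ (u : EReal))
    (hlt : ∀ r : ℝ, e < (r : EReal) → r ∈ U) :
    IsGLB ((↑) '' U : Set EReal) e := by
  refine ⟨Set.forall_mem_image.2 hle, fun b hb => not_lt.1 fun hbe => ?_⟩
  obtain ⟨r, her, hrb⟩ := exists_between_coe_real hbe
  exact (hb (Set.mem_image_of_mem _ (hlt r her))).not_gt hrb

theorem mem_of_coe_lt_sSup_image (hL : IsLowerSet L) {r : ℝ}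
    (hr : (r : EReal) < sSup ((↑) '' L)) : r ∈ L := by
  obtain ⟨_, ⟨l, hl, rfl⟩, hrl⟩ := lt_sSup_iff.1 hr
  exact hL (EReal.coe_le_coe_iff.1 hrl.le) hl

theorem mem_of_sInf_image_lt_coe (hU : IsUpperSet U) {r : ℝ}
    (hr : sInf ((↑) '' U) < (r : EReal)) : r ∈ U := by
  obtain ⟨_, ⟨u, hu, rfl⟩, hur⟩ := sInf_lt_iff.1 hr
  exact hU (EReal.coe_le_coe_iff.1 hur.le) hu

theorem eq_sSup_and_eq_sInf_of_separates (hLU : ∀ l ∈ L, ∀ u ∈ U, l < u)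
    (hL : ∀ r : ℝ, (r : EReal) < e → r ∈ L) (hU : ∀ r : ℝ, e < (r : EReal) → r ∈ U) :
    e = sSup ((↑) '' L) ∧ e = sInf ((↑) '' U) := by
  have hle_L : ∀ l ∈ L, (l : EReal) ≤ e := fun l hl =>
    not_lt.1 fun hel => (hLU l hl l (hU l hel)).false
  have hle_U : ∀ u ∈ U, e ≤ (u : EReal) := fun u hu =>
    not_lt.1 fun hue => (hLU u (hL u hue) u hu).false
  exact ⟨(isLUB_image_coe hle_L hL).sSup_eq.symm, (isGLB_image_coe hle_U hU).sInf_eq.symm⟩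

end EReal

theorem expectation_existence_uniqueness (P : PlausiblePreorder T) (X : T) :
    ((∃ e : EReal, ExpIs P X e) ↔
      sSup ((fun r : ℝ => (r : EReal)) '' {r : ℝ | P.lt (r • (1 : T)) X}) =
      sInf ((fun r : ℝ => (r : EReal)) '' {r : ℝ | P.lt X (r • (1 : T))})) ∧
    (∀ e : EReal, ExpIs P X e →
      e = sSup ((fun r : ℝ => (r : EReal)) '' {r : ℝ | P.lt (r • (1 : T)) X}) ∧
      e = sInf ((fun r : ℝ => (r : EReal)) '' {r : ℝ | P.lt X (r • (1 : T))})) := by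
  set L := {r : ℝ | P.lt (r • (1 : T)) X}
  set U := {r : ℝ | P.lt X (r • (1 : T))}
  have uniqueness (e : EReal) (he : ExpIs P X e) : e = sSup ((↑) '' L) ∧ e = sInf ((↑) '' U) :=
    EReal.eq_sSup_and_eq_sInf_of_separates
      (fun _ hl _ hu => P.lt_of_smul_one_lt_of_lt_smul_one hl hu)
      ((expIs_iff P X e).1 he).1 ((expIs_iff P X e).1 he).2
  refine ⟨⟨fun ⟨e, he⟩ => (uniqueness e he).1.symm.trans (uniqueness e he).2, fun h => ?_⟩,
    uniqueness⟩
  refine ⟨sSup ((↑) '' L), (expIs_iff P X _).2 ⟨fun r hr => ?_, fun r hr => ?_⟩⟩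
  · exact EReal.mem_of_coe_lt_sSup_image (P.isLowerSet_setOf_smul_one_lt X) hr
  · exact EReal.mem_of_sInf_image_lt_coe (P.isUpperSet_setOf_lt_smul_one X) (h ▸ hr)
end

section
/- Preorder consistency: if $E(X)$ and $E(Y)$ both exist (in the extended reals) and $E(X) < E(Y)$, then $X \lnsim Y$; if both exist and $X \lesssim Y$, then $E(X) \leq E(Y)$. -/
variable {T : Type*} [CommRing T] [Algebra ℝ T]

namespace PlausiblePreorder

variable (P : PlausiblePreorder T) {A B C A' B' : T}

theorem le_iff_of_sub_eq (h : B - A = B' - A') : P.le A B ↔ P.le A' B' := by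
  rw [P.extension A B, P.extension A' B', h]

theorem lt_iff_of_sub_eq (h : B - A = B' - A') : P.lt A B ↔ P.lt A' B' := by
  have h' : A - B = A' - B' := by linear_combination -h
  rw [PlausiblePreorder.lt, PlausiblePreorder.lt, P.le_iff_of_sub_eq h, P.le_iff_of_sub_eq h']

variable {P}

theorem le_trans_s13 (hAB : P.le A B) (hBC : P.le B C) : P.le A C := by
  rw [P.extension] at hAB hBC ⊢
  simpa only [sub_add_sub_cancel'] using P.additive _ _ hAB hBC

theorem lt_trans (hAB : P.lt A B) (hBC : P.lt B C) : P.lt A C :=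
  ⟨le_trans_s13 hAB.1 hBC.1, fun hCA => hAB.2 (le_trans_s13 hBC.1 hCA)⟩

end PlausiblePreorder

namespace ExpIs

variable {P : PlausiblePreorder T} {X : T} {e : EReal} {y : ℝ}

theorem lt_smul_one (hX : ExpIs P X e) (hy : e < y) : P.lt X (y • (1 : T)) := by
  rcases hX with ⟨x, rfl, hx⟩ | ⟨rfl, -⟩ | ⟨rfl, hx⟩
  · have hxy : x < y := EReal.coe_lt_coe_iff.mp hy
    refine (P.lt_iff_of_sub_eq ?_).mp (hx (y - x) (sub_pos.mpr hxy)).2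
    module
  · exact absurd hy not_top_lt
  · exact hx y

theorem smul_one_lt (hX : ExpIs P X e) (hy : (y : EReal) < e) : P.lt (y • (1 : T)) X := by
  rcases hX with ⟨x, rfl, hx⟩ | ⟨rfl, hx⟩ | ⟨rfl, -⟩
  · have hyx : y < x := EReal.coe_lt_coe_iff.mp hy
    refine (P.lt_iff_of_sub_eq ?_).mp (hx (x - y) (sub_pos.mpr hyx)).1
    module
  · exact hx y
  · exact absurd hy not_lt_bot

theorem lt_of_lt {Y : T} {e' : EReal} (hX : ExpIs P X e) (hY : ExpIs P Y e') (h : e < e') :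
    P.lt X Y :=
  let ⟨_, her, hre'⟩ := EReal.lt_iff_exists_real_btwn.mp h
  PlausiblePreorder.lt_trans (hX.lt_smul_one her) (hY.smul_one_lt hre')

end ExpIs

theorem preorder_consistency (P : PlausiblePreorder T) (X Y : T) (ex ey : EReal)
    (hX : ExpIs P X ex) (hY : ExpIs P Y ey) :
    (ex < ey → P.lt X Y) ∧ (P.le X Y → ex ≤ ey) :=
  ⟨hX.lt_of_lt hY, fun hXY => not_lt.mp fun hyx => (hY.lt_of_lt hX hyx).2 hXY⟩
end

section
/- Chain form of Bayes' rule (finite case): if $E(X|C\cdot D) = x$ and $P(C|D) = E(C|D) = c$ are both real numbers, then $E(X\cdot C|D)$ exists and equals $x\cdot c$. -/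
variable {T : Type*} [CommRing T] [Algebra ℝ T]

/-- The conditional expectation of `X` given event `C` is the real number `x`. -/
def CondExpReal (P : PlausiblePreorder T) (X C : T) (x : ℝ) : Prop :=
  ∀ ε : ℝ, 0 < ε →
    P.lt ((-ε) • C) (X * C - x • C) ∧ P.lt (X * C - x • C) (ε • C)

/-- The conditional expectation of `X` given event `C` is `+∞`. -/
def CondExpTop (P : PlausiblePreorder T) (X C : T) : Prop :=
  ∀ y : ℝ, P.lt (y • C) (X * C)

/-- The conditional expectation of `X` given event `C` is `-∞`. -/
def CondExpBot (P : PlausiblePreorder T) (X C : T) : Prop :=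
  ∀ y : ℝ, P.lt (X * C) (y • C)

/-!
Split `X C D - x c D = (X (C D) - x (C D)) + x (C D - c D)`. With `δ = ε / (1 + |x|)`, the first
summand lies between `∓ δ (C D)`, hence between `∓ δ D` because `C D ≲ D` for events, and the
second between `∓ |x| δ D`; this gives the non-strict bounds `∓ ε D`. The strict inequalities in
the definition of a conditional expectation only serve to exclude the degenerate case `D ≲ 0`
(`condExpReal_iff`), and this is inherited from `P(C|D) = c`.
-/

namespace PlausiblePreorder

variable (P : PlausiblePreorder T) {X Y Z X' Y' A : T} {a b : ℝ}

theorem le_refl (X : T) : P.le X X := by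
  rw [P.extension, sub_self]
  exact P.plausible 0 (mul_zero 0)

theorem le_trans_s14 (hXY : P.le X Y) (hYZ : P.le Y Z) : P.le X Z := by
  rw [P.extension] at *
  simpa using P.additive _ _ hXY hYZ

theorem add_le_add (hX : P.le X Y) (hX' : P.le X' Y') : P.le (X + X') (Y + Y') := by
  rw [P.extension] at *
  convert P.additive _ _ hX hX' using 1
  abel

theorem smul_le_smul_of_nonneg_left (hq : 0 ≤ a) (hXY : P.le X Y) : P.le (a • X) (a • Y) := by
  rw [P.extension] at *
  simpa [smul_sub] using P.smul_nonneg a _ hq hXY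

theorem smul_le_smul_of_nonpos_right (hab : a ≤ b) (hA : P.le A 0) : P.le (b • A) (a • A) := by
  rw [P.extension, zero_sub] at hA
  rw [P.extension, show a • A - b • A = (b - a) • -A by module]
  exact P.smul_nonneg _ _ (sub_nonneg.mpr hab) hA

theorem le_zero_of_smul_le_smul (hab : a < b) (h : P.le (b • A) (a • A)) : P.le A 0 := by
  rw [P.extension] at h
  rw [P.extension, zero_sub]
  convert P.smul_nonneg (b - a)⁻¹ _ (inv_nonneg.mpr (sub_nonneg.mpr hab.le)) h using 1
  rw [← sub_smul, smul_smul, ← neg_sub b a, mul_neg, inv_mul_cancel₀ (sub_ne_zero.mpr hab.ne'),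
    neg_one_smul]

theorem mul_le_of_isIdempotentElem {C D : T} (hC : IsIdempotentElem C) (hD : IsIdempotentElem D) :
    P.le (C * D) D := by
  rw [P.extension, show D - C * D = (1 - C) * D by ring]
  exact P.plausible _ (hC.one_sub.mul hD)

instance : Trans P.le P.le P.le := ⟨P.le_trans_s14⟩

theorem neg_le_neg (hXY : P.le X Y) : P.le (-Y) (-X) := by
  rw [P.extension] at *
  rwa [neg_sub_neg]

theorem abs_smul_bounds (hlo : P.le (-A) Z) (hhi : P.le Z A) (x : ℝ) :
    P.le (-(|x| • A)) (x • Z) ∧ P.le (x • Z) (|x| • A) := by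
  wlog hx : 0 ≤ x generalizing x Z
  · have hlo' : P.le (-A) (-Z) := P.neg_le_neg hhi
    have hhi' : P.le (-Z) A := by simpa using P.neg_le_neg hlo
    simpa using this hlo' hhi' (-x) (by linarith)
  rw [abs_of_nonneg hx, ← smul_neg]
  exact ⟨P.smul_le_smul_of_nonneg_left hx hlo, P.smul_le_smul_of_nonneg_left hx hhi⟩

end PlausiblePreorder

theorem condExpReal_iff {P : PlausiblePreorder T} {X C : T} {x : ℝ} :
    CondExpReal P X C x ↔ ¬ P.le C 0 ∧
      ∀ ε : ℝ, 0 < ε → P.le ((-ε) • C) (X * C - x • C) ∧ P.le (X * C - x • C) (ε • C) := by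
  constructor
  · intro h
    refine ⟨fun hC => ?_, fun ε hε => ⟨(h ε hε).1.1, (h ε hε).2.1⟩⟩
    obtain ⟨⟨-, hlo⟩, ⟨hhi, -⟩⟩ := h 1 one_pos
    exact hlo (P.le_trans_s14 hhi (P.smul_le_smul_of_nonpos_right (by norm_num) hC))
  · rintro ⟨hC, h⟩ ε hε
    obtain ⟨hlo, hhi⟩ := h ε hε
    obtain ⟨hlo', hhi'⟩ := h (ε / 2) (half_pos hε)
    refine ⟨⟨hlo, fun hle => hC ?_⟩, ⟨hhi, fun hle => hC ?_⟩⟩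
    · exact P.le_zero_of_smul_le_smul (by linarith) (P.le_trans_s14 hlo' hle)
    · exact P.le_zero_of_smul_le_smul (by linarith) (P.le_trans_s14 hle hhi')

theorem bayes_chain_form (P : PlausiblePreorder T) (X C D : T)
    (hC : C * C = C) (hD : D * D = D) (x c : ℝ)
    (hx : CondExpReal P X (C * D) x) (hc : CondExpReal P C D c) :
    CondExpReal P (X * C) D (x * c) := by
  rw [condExpReal_iff] at hx hc ⊢
  refine ⟨hc.1, fun ε hε => ?_⟩
  set δ := ε / (1 + |x|)
  have hδ : 0 < δ := by positivity
  have hεδ : ε = δ + |x| * δ := by simp only [δ]; field_simp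
  obtain ⟨hx_lo, hx_hi⟩ := hx.2 δ hδ
  obtain ⟨hc_lo, hc_hi⟩ := hc.2 δ hδ
  have hCD : P.le (δ • (C * D)) (δ • D) :=
    P.smul_le_smul_of_nonneg_left hδ.le (P.mul_le_of_isIdempotentElem hC hD)
  obtain ⟨hxc_lo, hxc_hi⟩ := P.abs_smul_bounds (by simpa only [neg_smul] using hc_lo) hc_hi x
  rw [show X * C * D - (x * c) • D = (X * (C * D) - x • (C * D)) + x • (C * D - c • D) by
    rw [mul_assoc]; module, hεδ]
  constructor
  · calc (-(δ + |x| * δ)) • D = -(δ • D) + -(|x| • δ • D) := by module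
      P.le _ (-(δ • (C * D)) + x • (C * D - c • D)) := P.add_le_add (P.neg_le_neg hCD) hxc_lo
      P.le _ ((X * (C * D) - x • (C * D)) + x • (C * D - c • D)) :=
        P.add_le_add (by simpa only [neg_smul] using hx_lo) (P.le_refl _)
  · calc P.le ((X * (C * D) - x • (C * D)) + x • (C * D - c • D)) (δ • (C * D) + |x| • δ • D) :=
        P.add_le_add hx_hi hxc_hi
      P.le _ (δ • D + |x| • δ • D) := P.add_le_add hCD (P.le_refl _)
      _ = (δ + |x| * δ) • D := by module
end

section
/- Sum rule for Coxian plausible values: if $PV$ is a Coxian plausible value, $A,B \in \mathcal{F}$ with $A\cdot B = 0$, and $C \in \mathcal{F}_0$, then $PV(A+B|C) = PV(A|C) + PV(B|C)$. -/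
/-!
Writing `A + B = 1 - (1 - A)(1 - B)`, the sum rule reduces to the difference rule
`PV((1 - X) Y | D) = PV(Y | D) - PV(X Y | D)`, which is the product rule followed by negation
at the condition `Y D`. When `Y D = 0` that condition is excluded, but then all three values
vanish, because an event disjoint from the condition has plausibility `0`.
-/

/-- `IsCoxianPV F PV` : `PV` is a Coxian plausible value on the family `F` of events
of the unital associative commutative real algebra `T`. -/
structure IsCoxianPV {T : Type*} [CommRing T] [Algebra ℝ T]
    (F : Set T) (PV : T → T → ℝ) : Prop where
  nonempty : F.Nonempty
  events : ∀ A ∈ F, A * A = A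
  neg_mem : ∀ A ∈ F, 1 - A ∈ F
  conj_mem : ∀ A ∈ F, ∀ B ∈ F, A * B ∈ F
  nonneg : ∀ A ∈ F, ∀ C ∈ F, C ≠ 0 → 0 ≤ PV A C
  positivity : ∀ C ∈ F, C ≠ 0 → 0 < PV C C
  negation : ∀ A ∈ F, ∀ C ∈ F, C ≠ 0 → PV (1 - A) C = 1 - PV A C
  bayes : ∀ A ∈ F, ∀ C ∈ F, ∀ D ∈ F, C * D ≠ 0 → PV (A * C) D = PV A (C * D) * PV C D

namespace IsCoxianPV

variable {T : Type*} [CommRing T] [Algebra ℝ T] {F : Set T} {PV : T → T → ℝ}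

theorem one_mem (h : IsCoxianPV F PV) : (1 : T) ∈ F := by
  obtain ⟨X, hX⟩ := h.nonempty
  have hzero : X * (1 - X) = 0 := by linear_combination -h.events X hX
  simpa [hzero] using h.neg_mem _ (h.conj_mem X hX _ (h.neg_mem X hX))

theorem pv_one (h : IsCoxianPV F PV) {C : T} (hC : C ∈ F) (hC0 : C ≠ 0) : PV 1 C = 1 := by
  have hCC : C * C = C := h.events C hC
  have hprod := h.bayes 1 h.one_mem C hC C hC (by rwa [hCC])
  rw [one_mul, hCC] at hprod
  have hpos := h.positivity C hC hC0
  nlinarith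

theorem pv_zero (h : IsCoxianPV F PV) {C : T} (hC : C ∈ F) (hC0 : C ≠ 0) : PV 0 C = 0 := by
  simpa [h.pv_one hC hC0] using h.negation 1 h.one_mem C hC hC0

theorem pv_eq_zero_of_mul_eq_zero (h : IsCoxianPV F PV) {X C : T} (hX : X ∈ F) (hC : C ∈ F)
    (hC0 : C ≠ 0) (hXC : X * C = 0) : PV X C = 0 := by
  have hCC : C * C = C := h.events C hC
  have hprod := h.bayes X hX C hC C hC (by rwa [hCC])
  rw [hXC, hCC, h.pv_zero hC hC0] at hprod
  exact (mul_eq_zero.mp hprod.symm).resolve_right (h.positivity C hC hC0).ne'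

theorem pv_sub_mul (h : IsCoxianPV F PV) {X Y D : T} (hX : X ∈ F) (hY : Y ∈ F) (hD : D ∈ F)
    (hD0 : D ≠ 0) : PV ((1 - X) * Y) D = PV Y D - PV (X * Y) D := by
  have hXY : X * Y ∈ F := h.conj_mem X hX Y hY
  have hX'Y : (1 - X) * Y ∈ F := h.conj_mem _ (h.neg_mem X hX) Y hY
  by_cases hYD : Y * D = 0
  · have vanish : ∀ Z, Z ∈ F → PV (Z * Y) D = 0 := fun Z hZ ↦
      h.pv_eq_zero_of_mul_eq_zero (h.conj_mem Z hZ Y hY) hD hD0 (by rw [mul_assoc, hYD, mul_zero])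
    have hY0 : PV Y D = 0 := h.pv_eq_zero_of_mul_eq_zero hY hD hD0 hYD
    rw [vanish _ (h.neg_mem X hX), vanish X hX, hY0, sub_zero]
  · rw [h.bayes _ (h.neg_mem X hX) Y hY D hD hYD, h.bayes X hX Y hY D hD hYD,
      h.negation X hX _ (h.conj_mem Y hY D hD) hYD]
    ring

end IsCoxianPV

theorem coxian_sum_rule {T : Type*} [CommRing T] [Algebra ℝ T]
    (F : Set T) (PV : T → T → ℝ) (h : IsCoxianPV F PV)
    (A B C : T) (hA : A ∈ F) (hB : B ∈ F) (hAB : A * B = 0)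
    (hC : C ∈ F) (hC0 : C ≠ 0) :
    PV (A + B) C = PV A C + PV B C := by
  have hB' : 1 - B ∈ F := h.neg_mem B hB
  have hsum : A + B = 1 - (1 - A) * (1 - B) := by linear_combination hAB
  have hA_sub : A * (1 - B) = A := by linear_combination -hAB
  rw [hsum, h.negation _ (h.conj_mem _ (h.neg_mem A hA) _ hB') C hC hC0,
    h.pv_sub_mul hA hB' hC hC0, hA_sub, h.negation B hB C hC hC0]
  ring
end
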